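/- arXiv:1609.07335 — 3 statements merged into one kernel-verified Lean document; each statement's English description precedes it below -/
import Mathlib

section
/- Let n ≥ 2 and let A and A′ be multisets of permutations in S_{n−1} such that Q(A) = Q(A′). Then Q(AC_n) = Q(A′C_n), where AC_n is the multiset {π c^k : π ∈ A, 0 ≤ k < n} counted with multiplicities. -/
open scoped Classical

noncomputable section

namespace SchurRot

/-! ### Permutations -/

/-- The value of the permutation `π ∈ S_n` (in one-line notation, with positions and
values `1,…,n`) at position `i ∈ [1,n]`. -/
def permVal {n : ℕ} (π : Equiv.Perm (Fin n)) (i : ℕ) : ℕ :=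
  if h : i - 1 < n then ((π ⟨i - 1, h⟩ : Fin n) : ℕ) + 1 else 0

/-- The descent set `Des(π) = {i ∈ [n-1] : π(i) > π(i+1)}`. -/
def DesPerm {n : ℕ} (π : Equiv.Perm (Fin n)) : Finset ℕ :=
  (Finset.Icc 1 (n - 1)).filter fun i => permVal π (i + 1) < permVal π i

/-- The cyclic descent set of `π ∈ S_n`: `Des(π)`, with `n` added iff `π(n) > π(1)`. -/
def cDesPerm {n : ℕ} (π : Equiv.Perm (Fin n)) : Finset ℕ :=
  if permVal π 1 < permVal π n then insert n (DesPerm π) else DesPerm π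

/-- `π ∈ S_n` fixes the letter `n` (so it can be viewed as an element of `S_{n-1}`). -/
def FixesTop {n : ℕ} (π : Equiv.Perm (Fin n)) : Prop :=
  ∀ i : Fin n, (i : ℕ) = n - 1 → π i = i

/-! ### Quasisymmetric and symmetric functions, in variables `x_1, x_2, …`
indexed by positive natural numbers (the variable `x_0` is unused). -/

/-- The fundamental quasisymmetric function `F_{n,D}`, as a formal power series in the
variables `x_i, i ∈ ℕ` (only variables with positive index are used): the coefficient of
a monomial `m` is the number of weakly increasing sequences `1 ≤ i_1 ≤ … ≤ i_n`, strictly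
increasing at positions in `D`, with content monomial `m`. -/
def Fqs (n : ℕ) (D : Finset ℕ) : MvPowerSeries ℕ ℤ :=
  fun m => (Set.ncard {g : Fin n → ℕ |
    (∀ p, 1 ≤ g p) ∧ Monotone g ∧
    (∀ j ∈ D, ∀ (h1 : j - 1 < n) (h2 : j < n), g ⟨j - 1, h1⟩ < g ⟨j, h2⟩) ∧
    (∑ p, Finsupp.single (g p) (1 : ℕ)) = m} : ℤ)

/-- `Q(B) = Σ_{π ∈ B} F_{m, Des(π)}` for a finite set `B` of permutations. -/
def Qset (m : ℕ) {n : ℕ} (B : Finset (Equiv.Perm (Fin n))) : MvPowerSeries ℕ ℤ :=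
  ∑ π ∈ B, Fqs m (DesPerm π)

/-- `Q(B)` for a multiset `B` of permutations, counted with multiplicity. -/
def Qmult (m : ℕ) {n : ℕ} (B : Multiset (Equiv.Perm (Fin n))) : MvPowerSeries ℕ ℤ :=
  (B.map fun π => Fqs m (DesPerm π)).sum

/-- The set `A·C_n = {π c^k : π ∈ A, 0 ≤ k < n}`, where `c = finRotate n` is the
`n`-cycle `(1,2,…,n)`. -/
def ACn {n : ℕ} (A : Finset (Equiv.Perm (Fin n))) : Finset (Equiv.Perm (Fin n)) :=
  (A ×ˢ Finset.range n).image fun p => p.1 * (finRotate n) ^ p.2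

/-- The multiset `A·C_n`, counted with multiplicities. -/
def ACmult {n : ℕ} (A : Multiset (Equiv.Perm (Fin n))) : Multiset (Equiv.Perm (Fin n)) :=
  A.bind fun π => (Multiset.range n).map fun k => π * (finRotate n) ^ k

/-- A formal power series in the variables `x_i, i ∈ ℕ` is a symmetric function if its
coefficients are invariant under every permutation of the variables. -/
def IsSymmFn (f : MvPowerSeries ℕ ℤ) : Prop :=
  ∀ (σ : Equiv.Perm ℕ) (m : ℕ →₀ ℕ),
    MvPowerSeries.coeff (Finsupp.equivMapDomain σ m) f = MvPowerSeries.coeff m f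

/-! ### Tableaux: fillings of an arbitrary finite cell set (in English notation,
cell `(i,j)` is in row `i` (increasing downwards) and column `j`). -/

/-- A semistandard filling of `cells` (entries ≥ 1, weakly increasing along rows,
strictly increasing down columns, `0` outside `cells`). -/
def IsSSYT (cells : Finset (ℕ × ℕ)) (g : ℕ × ℕ → ℕ) : Prop :=
  (∀ c, c ∉ cells → g c = 0) ∧ (∀ c ∈ cells, 1 ≤ g c) ∧
  (∀ a ∈ cells, ∀ b ∈ cells, a.1 = b.1 → a.2 ≤ b.2 → g a ≤ g b) ∧
  (∀ a ∈ cells, ∀ b ∈ cells, a.2 = b.2 → a.1 < b.1 → g a < g b)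

/-- The content monomial of a filling. -/
def contentOf (cells : Finset (ℕ × ℕ)) (g : ℕ × ℕ → ℕ) : ℕ →₀ ℕ :=
  ∑ c ∈ cells, Finsupp.single (g c) 1

/-- The (skew) Schur function of an arbitrary finite cell set: the sum, over all
semistandard fillings, of their content monomials. -/
def schurOf (cells : Finset (ℕ × ℕ)) : MvPowerSeries ℕ ℤ :=
  fun m => (Set.ncard {g : ℕ × ℕ → ℕ | IsSSYT cells g ∧ contentOf cells g = m} : ℤ)

/-- `f` is Schur-positive of degree `m`: a nonnegative integer combination of Schur
functions of partitions of `m` (encoded by a multiset of Young diagrams). -/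
def SchurPositive (m : ℕ) (f : MvPowerSeries ℕ ℤ) : Prop :=
  ∃ M : Multiset YoungDiagram, (∀ μ ∈ M, μ.cells.card = m) ∧
    f = (M.map fun μ => schurOf μ.cells).sum

/-! ### Standard fillings, rotation, reading words -/

/-- A filling of `cells` by the letters `1,…,n`, each used exactly once (and `0`
outside `cells`). -/
def IsFillingF (n : ℕ) (cells : Finset (ℕ × ℕ)) (f : ℕ × ℕ → ℕ) : Prop :=
  Set.BijOn f ↑cells (Set.Icc 1 n) ∧ ∀ c, c ∉ cells → f c = 0

/-- A filling is standard if its rows and columns increase. -/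
def IsStandardF (cells : Finset (ℕ × ℕ)) (f : ℕ × ℕ → ℕ) : Prop :=
  (∀ a ∈ cells, ∀ b ∈ cells, a.1 = b.1 → a.2 < b.2 → f a < f b) ∧
  (∀ a ∈ cells, ∀ b ∈ cells, a.2 = b.2 → a.1 < b.1 → f a < f b)

/-- Addition of `k` modulo `n` on the letters `1,…,n` (with `0` identified with `n`). -/
def rotval (n k e : ℕ) : ℕ := (e + k - 1) % n + 1

/-- Addition of an integer `k` modulo `n` on the letters `1,…,n`. -/
def rotvalZ (n : ℕ) (k : ℤ) (e : ℕ) : ℕ := (((e : ℤ) + k - 1) % (n : ℤ)).toNat + 1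

/-- Apply `φ` to every entry of a filling (keeping `0` outside `cells`);
e.g. `mapEntries cells (rotval n k) T` is the rotated tableau `k + T`. -/
def mapEntries (cells : Finset (ℕ × ℕ)) (φ : ℕ → ℕ) (f : ℕ × ℕ → ℕ) : ℕ × ℕ → ℕ :=
  fun c => if c ∈ cells then φ (f c) else 0

/-- The row containing the entry `e`. -/
def rowOf (cells : Finset (ℕ × ℕ)) (f : ℕ × ℕ → ℕ) (e : ℕ) : ℕ :=
  sInf {i | ∃ j, (i, j) ∈ cells ∧ f (i, j) = e}

/-- The cell containing the entry `e`. -/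
def cellOf (cells : Finset (ℕ × ℕ)) (f : ℕ × ℕ → ℕ) (e : ℕ) : ℕ × ℕ :=
  (rowOf cells f e,
    sInf {j | (rowOf cells f e, j) ∈ cells ∧ f (rowOf cells f e, j) = e})

/-- The cyclic descent set of a (rotated) filling of size `n`:
`{i ∈ [n] : i+1 (mod n) lies in a strictly lower row than i}`. -/
def cDesRot (n : ℕ) (cells : Finset (ℕ × ℕ)) (f : ℕ × ℕ → ℕ) : Finset ℕ :=
  (Finset.Icc 1 n).filter fun i => rowOf cells f i < rowOf cells f (rotval n 1 i)

/-- The descent set of a filling of size `n`: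
`{i ∈ [n-1] : i+1 lies in a strictly lower row than i}`. -/
def DesTab (n : ℕ) (cells : Finset (ℕ × ℕ)) (f : ℕ × ℕ → ℕ) : Finset ℕ :=
  (Finset.Icc 1 (n - 1)).filter fun i => rowOf cells f i < rowOf cells f (i + 1)

/-- `a` comes before `b` in reading order (rows left to right, bottom row first). -/
def readBefore (a b : ℕ × ℕ) : Prop :=
  b.1 < a.1 ∨ (a.1 = b.1 ∧ a.2 < b.2)

/-- The (1-indexed) position of the cell `c` in the reading order of `cells`. -/
def posInRead (cells : Finset (ℕ × ℕ)) (c : ℕ × ℕ) : ℕ :=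
  (cells.filter fun c' => readBefore c' c).card + 1

/-- The value at `e` of the inverse of the reading word of the filling `f`, i.e. the
position of the entry `e` in the reading word. -/
def invReadVal (cells : Finset (ℕ × ℕ)) (f : ℕ × ℕ → ℕ) (e : ℕ) : ℕ :=
  posInRead cells (cellOf cells f e)

/-- `A_λ` (for `cells` the diagram of `λ ⊢ m`): the set of permutations in `S_m` that are
inverse reading words of standard Young tableaux of shape `λ`. -/
def invWordSet (m : ℕ) (cells : Finset (ℕ × ℕ)) : Finset (Equiv.Perm (Fin m)) :=
  Finset.univ.filter fun π => ∃ f : ℕ × ℕ → ℕ,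
    IsFillingF m cells f ∧ IsStandardF cells f ∧
    ∀ e ∈ Finset.Icc 1 m, permVal π e = invReadVal cells f e

/-! ### The jeu-de-taquin type straightening algorithms -/

/-- The entry `i` is short: some entry immediately above it or immediately to its left
is larger. -/
def IsShort (cells : Finset (ℕ × ℕ)) (f : ℕ × ℕ → ℕ) (i : ℕ) : Prop :=
  ∃ c ∈ cells, f c = i ∧
    ((1 ≤ c.1 ∧ (c.1 - 1, c.2) ∈ cells ∧ i < f (c.1 - 1, c.2)) ∨
     (1 ≤ c.2 ∧ (c.1, c.2 - 1) ∈ cells ∧ i < f (c.1, c.2 - 1)))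

/-- The entry `i` is tall: some entry immediately below it or immediately to its right
is smaller. -/
def IsTall (cells : Finset (ℕ × ℕ)) (f : ℕ × ℕ → ℕ) (i : ℕ) : Prop :=
  ∃ c ∈ cells, f c = i ∧
    (((c.1 + 1, c.2) ∈ cells ∧ f (c.1 + 1, c.2) < i) ∨
     ((c.1, c.2 + 1) ∈ cells ∧ f (c.1, c.2 + 1) < i))

def shorts (n : ℕ) (cells : Finset (ℕ × ℕ)) (f : ℕ × ℕ → ℕ) : Finset ℕ :=
  (Finset.Icc 1 n).filter fun i => IsShort cells f i

def talls (n : ℕ) (cells : Finset (ℕ × ℕ)) (f : ℕ × ℕ → ℕ) : Finset ℕ :=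
  (Finset.Icc 1 n).filter fun i => IsTall cells f i

/-- One elementary step of `jdt`: take the minimal short entry `i` and switch it with
the larger of the entries immediately above it and immediately to its left. -/
def stepFun (n : ℕ) (cells : Finset (ℕ × ℕ)) (f : ℕ × ℕ → ℕ) : ℕ × ℕ → ℕ :=
  if h : (shorts n cells f).Nonempty then
    let i := (shorts n cells f).min' h
    let c := cellOf cells f i
    let av := if 1 ≤ c.1 ∧ (c.1 - 1, c.2) ∈ cells then f (c.1 - 1, c.2) else 0
    let lv := if 1 ≤ c.2 ∧ (c.1, c.2 - 1) ∈ cells then f (c.1, c.2 - 1) else 0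
    mapEntries cells (Equiv.swap i (max av lv)) f
  else f

/-- One elementary step of `ijdt`: take the maximal tall entry `i` and switch it with
the smaller of the entries immediately below it and immediately to its right. -/
def istepFun (n : ℕ) (cells : Finset (ℕ × ℕ)) (f : ℕ × ℕ → ℕ) : ℕ × ℕ → ℕ :=
  if h : (talls n cells f).Nonempty then
    let i := (talls n cells f).max' h
    let c := cellOf cells f i
    let bv := if (c.1 + 1, c.2) ∈ cells then f (c.1 + 1, c.2) else n + 1
    let rv := if (c.1, c.2 + 1) ∈ cells then f (c.1, c.2 + 1) else n + 1
    mapEntries cells (Equiv.swap i (min bv rv)) f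
  else f

/-- The straightening `jdt`: repeat the elementary step until the filling is standard. -/
def jdtFun (n : ℕ) (cells : Finset (ℕ × ℕ)) (f : ℕ × ℕ → ℕ) : ℕ × ℕ → ℕ :=
  if h : ∃ m, IsStandardF cells ((stepFun n cells)^[m] f) then
    (stepFun n cells)^[Nat.find h] f
  else f

/-- The straightening `ijdt`: repeat the reverse elementary step until the filling is
standard. -/
def ijdtFun (n : ℕ) (cells : Finset (ℕ × ℕ)) (f : ℕ × ℕ → ℕ) : ℕ × ℕ → ℕ :=
  if h : ∃ m, IsStandardF cells ((istepFun n cells)^[m] f) then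
    (istepFun n cells)^[Nat.find h] f
  else f

/-! ### The shape `λ^□` -/

/-- The cell of the disconnected box of `λ^□`, strictly north and strictly east of `λ`. -/
def boxCell (lam : YoungDiagram) : ℕ × ℕ := (0, lam.rowLen 0)

/-- The skew shape `λ^□`: `λ` (shifted one row down) together with one disconnected box
at its upper right corner. -/
def boxShape (lam : YoungDiagram) : Finset (ℕ × ℕ) :=
  insert (boxCell lam) (lam.cells.image fun c => (c.1 + 1, c.2))

/-- `δ(P)`: the entry of the disconnected box of a filling of `λ^□`. -/
def deltaOf (lam : YoungDiagram) (f : ℕ × ℕ → ℕ) : ℕ := f (boxCell lam)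

/-- The inverse of `jdt` on `SYT(λ^□)`: `jdt⁻¹(P) = δ(P) + ijdt(-δ(P) + P)`. -/
def jdtInvFun (n : ℕ) (lam : YoungDiagram) (P : ℕ × ℕ → ℕ) : ℕ × ℕ → ℕ :=
  mapEntries (boxShape lam) (rotval n (deltaOf lam P))
    (ijdtFun n (boxShape lam)
      (mapEntries (boxShape lam) (rotval n (n - deltaOf lam P)) P))

/-- The cyclic descent set of `P ∈ SYT(λ^□)`: `cDes(P) = cDes_rot(jdt⁻¹(P))`. -/
def cDesBox (n : ℕ) (lam : YoungDiagram) (P : ℕ × ℕ → ℕ) : Finset ℕ :=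
  cDesRot n (boxShape lam) (jdtInvFun n lam P)

/-- The restriction of `f` to the entries in `S` is standard: there are no two entries
in `S` in which the smaller one lies weakly south and weakly east of the larger one. -/
def RestrictedStd (cells : Finset (ℕ × ℕ)) (f : ℕ × ℕ → ℕ) (S : Finset ℕ) : Prop :=
  ∀ a ∈ cells, ∀ b ∈ cells, f a ∈ S → f b ∈ S →
    a.1 ≤ b.1 → a.2 ≤ b.2 → a ≠ b → f a < f b

end SchurRot


noncomputable section
namespace SchurRot

/-!
For `D ⊆ [m-1]`, the coefficient of `F_{m,D}` at the content monomial of the word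
`1 ≤ w_1 ≤ … ≤ w_m` that increases by one exactly at the positions in `E` is `[D ⊆ E]`.
So `Q(A)` determines, for every `E`, the number of descent sets of `A` contained in `E`, and
Möbius inversion recovers the multiset of descent sets of `A`. On the other side, the descent
set of `π c^k` is the cyclic descent set of `π` shifted by `k` and cut down to `[n-1]`, and for
`π` fixing `n` the cyclic descent set is `Des(π) ∪ {n}`. Hence `Q(A C_n)` depends only on the
multiset of descent sets of `A`.
-/

section SubsetCounts

variable {α : Type*} [DecidableEq α]

lemma card_filter_subset_eq_sum_count (S : Multiset (Finset α)) (E : Finset α) :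
    (S.filter (· ⊆ E)).card = ∑ F ∈ E.powerset, S.count F := by
  rw [← Multiset.sum_count_eq_card (s := E.powerset)
    fun F hF => Finset.mem_powerset.2 (Multiset.mem_filter.1 hF).2]
  exact Finset.sum_congr rfl fun F hF =>
    Multiset.count_filter_of_pos (Finset.mem_powerset.1 hF)

-- Möbius inversion on the lattice of finite subsets.
lemma multiset_eq_of_card_filter_subset_eq {S S' : Multiset (Finset α)}
    (h : ∀ E, (S.filter (· ⊆ E)).card = (S'.filter (· ⊆ E)).card) : S = S' := by
  ext E
  induction E using Finset.strongInduction with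
  | _ E ih =>
    have hE := h E
    have hsub : ∀ F ∈ E.powerset.erase E, S.count F = S'.count F := fun F hF =>
      ih F (Finset.ssubset_iff_subset_ne.2
        ⟨Finset.mem_powerset.1 (Finset.mem_erase.1 hF).2, (Finset.mem_erase.1 hF).1⟩)
    rw [card_filter_subset_eq_sum_count, card_filter_subset_eq_sum_count,
      ← Finset.add_sum_erase _ _ (Finset.mem_powerset_self E),
      ← Finset.add_sum_erase _ _ (Finset.mem_powerset_self E), Finset.sum_congr rfl hsub] at hE
    omega

end SubsetCounts

lemma toMultiset_sum_single_one {ι α : Type*} (s : Finset ι) (g : ι → α) :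
    Finsupp.toMultiset (∑ p ∈ s, Finsupp.single (g p) 1) = s.val.map g := by
  rw [Finsupp.toMultiset_sum, ← Multiset.sum_map_singleton (s.val.map g), Multiset.map_map]
  simp only [Finsupp.toMultiset_single, one_smul]
  rfl

lemma eq_of_monotone_of_content_eq {m : ℕ} {g g' : Fin m → ℕ} (hg : Monotone g)
    (hg' : Monotone g')
    (h : ∑ p, Finsupp.single (g p) 1 = ∑ p, Finsupp.single (g' p) 1) : g = g' := by
  have hmap := congrArg Finsupp.toMultiset h
  rw [toMultiset_sum_single_one, toMultiset_sum_single_one, Fin.univ_val_map,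
    Fin.univ_val_map] at hmap
  exact List.ofFn_injective ((Quotient.exact hmap : (List.ofFn g).Perm _).eq_of_sortedLE
    (List.sortedLE_ofFn_iff.2 hg) (List.sortedLE_ofFn_iff.2 hg'))

lemma sum_map_ite_eq_card_filter {β R : Type*} [AddCommMonoidWithOne R] (S : Multiset β)
    (p : β → Prop) [DecidablePred p] :
    (S.map fun b => if p b then (1 : R) else 0).sum = (S.filter p).card := by
  induction S using Multiset.induction_on with
  | empty => simp
  | cons a S ih => by_cases h : p a <;> simp [h, ih, add_comm]

def stairWord (m : ℕ) (E : Finset ℕ) (p : Fin m) : ℕ := 1 + (E.filter (· ≤ (p : ℕ))).card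

def stairMonomial (m : ℕ) (E : Finset ℕ) : ℕ →₀ ℕ := ∑ p, Finsupp.single (stairWord m E p) 1

lemma stairWord_mono (m : ℕ) (E : Finset ℕ) : Monotone (stairWord m E) := fun p q hpq => by
  unfold stairWord
  gcongr
  exact hpq

lemma stairWord_lt_iff {m : ℕ} (E : Finset ℕ) {j : ℕ} (hj : 1 ≤ j) (h1 : j - 1 < m)
    (h2 : j < m) : stairWord m E ⟨j - 1, h1⟩ < stairWord m E ⟨j, h2⟩ ↔ j ∈ E := by
  have hsplit : E.filter (· ≤ j) = E.filter (· ≤ j - 1) ∪ E.filter (· = j) := by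
    ext e
    simp only [Finset.mem_filter, Finset.mem_union, ← and_or_left]
    exact and_congr_right fun _ => by omega
  have hdisj : Disjoint (E.filter (· ≤ j - 1)) (E.filter (· = j)) :=
    Finset.disjoint_filter.2 fun e _ hle heq => by omega
  unfold stairWord
  rw [hsplit, Finset.card_union_of_disjoint hdisj, Finset.filter_eq']
  split_ifs with hjE <;> simp [hjE]

lemma coeff_stairMonomial_Fqs {m : ℕ} {D : Finset ℕ} (hD : D ⊆ Finset.Icc 1 (m - 1))
    (E : Finset ℕ) :
    MvPowerSeries.coeff (stairMonomial m E) (Fqs m D) = if D ⊆ E then 1 else 0 := by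
  have key : ∀ g : Fin m → ℕ, ((∀ p, 1 ≤ g p) ∧ Monotone g ∧
      (∀ j ∈ D, ∀ (h1 : j - 1 < m) (h2 : j < m), g ⟨j - 1, h1⟩ < g ⟨j, h2⟩) ∧
      ∑ p, Finsupp.single (g p) 1 = stairMonomial m E) ↔ g = stairWord m E ∧ D ⊆ E := by
    intro g
    constructor
    · rintro ⟨-, hg, hstrict, hcontent⟩
      obtain rfl := eq_of_monotone_of_content_eq hg (stairWord_mono m E) hcontent
      refine ⟨rfl, fun j hj => ?_⟩
      have hjm := Finset.mem_Icc.1 (hD hj)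
      exact (stairWord_lt_iff E hjm.1 (by omega) (by omega)).1 (hstrict j hj _ _)
    · rintro ⟨rfl, hDE⟩
      refine ⟨fun p => Nat.le_add_right 1 _, stairWord_mono m E, fun j hj h1 h2 => ?_, rfl⟩
      exact (stairWord_lt_iff E (Finset.mem_Icc.1 (hD hj)).1 h1 h2).2 (hDE hj)
  rw [MvPowerSeries.coeff_apply, Fqs]
  simp only [key]
  by_cases hDE : D ⊆ E <;> simp [hDE]

lemma coeff_stairMonomial_sum_map_Fqs {m : ℕ} {S : Multiset (Finset ℕ)}
    (hS : ∀ D ∈ S, D ⊆ Finset.Icc 1 (m - 1)) (E : Finset ℕ) :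
    MvPowerSeries.coeff (stairMonomial m E) (S.map (Fqs m)).sum = (S.filter (· ⊆ E)).card := by
  rw [map_multiset_sum, Multiset.map_map, Function.comp_def,
    Multiset.map_congr rfl fun D hD => coeff_stairMonomial_Fqs (hS D hD) E]
  exact sum_map_ite_eq_card_filter S _

lemma multiset_eq_of_sum_map_Fqs_eq {m : ℕ} {S S' : Multiset (Finset ℕ)}
    (hS : ∀ D ∈ S, D ⊆ Finset.Icc 1 (m - 1)) (hS' : ∀ D ∈ S', D ⊆ Finset.Icc 1 (m - 1))
    (h : (S.map (Fqs m)).sum = (S'.map (Fqs m)).sum) : S = S' :=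
  multiset_eq_of_card_filter_subset_eq fun E => by
    have hE := congrArg (MvPowerSeries.coeff (stairMonomial m E)) h
    rw [coeff_stairMonomial_sum_map_Fqs hS, coeff_stairMonomial_sum_map_Fqs hS'] at hE
    exact_mod_cast hE

lemma one_le_rotval (n k e : ℕ) : 1 ≤ rotval n k e := Nat.le_add_left 1 _

lemma rotval_le {n : ℕ} (hn : 0 < n) (k e : ℕ) : rotval n k e ≤ n := Nat.mod_lt _ hn

lemma rotval_one_rotval {n : ℕ} (k : ℕ) {e : ℕ} (he : 1 ≤ e) :
    rotval n 1 (rotval n k e) = rotval n k (e + 1) := by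
  simp only [rotval, Nat.add_sub_cancel, Nat.mod_add_mod]
  congr 2
  omega

section Permutations

variable {n : ℕ}

lemma permVal_succ (π : Equiv.Perm (Fin n)) {j : ℕ} (hj : j < n) :
    permVal π (j + 1) = π ⟨j, hj⟩ + 1 := by
  rw [permVal, dif_pos (by omega : j + 1 - 1 < n)]
  rfl

lemma permVal_le (π : Equiv.Perm (Fin n)) (e : ℕ) : permVal π e ≤ n := by
  unfold permVal
  split_ifs
  · exact (π _).isLt
  · exact Nat.zero_le n

lemma permVal_top_of_fixesTop {π : Equiv.Perm (Fin n)} (hπ : FixesTop π) : permVal π n = n := by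
  unfold permVal
  split_ifs with h
  · rw [hπ _ rfl]
    exact Nat.sub_add_cancel (by omega)
  · omega

lemma DesPerm_subset_of_fixesTop {π : Equiv.Perm (Fin n)} (hπ : FixesTop π) :
    DesPerm π ⊆ Finset.Icc 1 (n - 2) := by
  intro i hi
  rw [DesPerm, Finset.mem_filter, Finset.mem_Icc] at hi
  obtain ⟨⟨hi1, hin⟩, hdes⟩ := hi
  refine Finset.mem_Icc.2 ⟨hi1, ?_⟩
  by_contra hlast
  obtain rfl : i + 1 = n := by omega
  rw [permVal_top_of_fixesTop hπ] at hdes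
  exact absurd (permVal_le π i) (by omega)

lemma cDesPerm_of_fixesTop (hn : 2 ≤ n) {π : Equiv.Perm (Fin n)} (hπ : FixesTop π) :
    cDesPerm π = insert n (DesPerm π) := by
  have htop : π ⟨n - 1, by omega⟩ = ⟨n - 1, by omega⟩ := hπ _ rfl
  have hne : (π ⟨0, by omega⟩ : ℕ) ≠ n - 1 := fun h =>
    absurd (Fin.mk.inj_iff.1 (π.injective ((Fin.ext h).trans htop.symm))) (by omega)
  have hlt : permVal π 1 < permVal π n := by
    rw [permVal_top_of_fixesTop hπ, permVal_succ π (by omega : 0 < n)]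
    have := (π ⟨0, by omega⟩).isLt
    omega
  rw [cDesPerm, if_pos hlt]

lemma val_finRotate_pow_apply (k : ℕ) (i : Fin n) : ((finRotate n ^ k) i : ℕ) = (i + k) % n := by
  induction k with
  | zero => simp [Nat.mod_eq_of_lt i.isLt]
  | succ k ih =>
    obtain ⟨N, rfl⟩ : ∃ N, n = N + 1 := Nat.exists_eq_succ_of_ne_zero i.pos.ne'
    rw [pow_succ', Equiv.Perm.mul_apply, finRotate_apply, Fin.val_add, ih, Fin.val_one',
      Nat.mod_add_mod, Nat.add_mod_mod, add_assoc]

lemma permVal_mul_finRotate_pow (π : Equiv.Perm (Fin n)) (k : ℕ) {e : ℕ} (he : 1 ≤ e)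
    (hen : e ≤ n) : permVal (π * finRotate n ^ k) e = permVal π (rotval n k e) := by
  obtain ⟨j, rfl⟩ : ∃ j, e = j + 1 := ⟨e - 1, by omega⟩
  have hjk : (j + k) % n < n := Nat.mod_lt _ (by omega)
  rw [rotval, show j + 1 + k - 1 = j + k by omega, permVal_succ _ (by omega),
    permVal_succ _ hjk, Equiv.Perm.mul_apply]
  congr 3
  exact Fin.ext (val_finRotate_pow_apply k _)

lemma mem_cDesPerm_iff (π : Equiv.Perm (Fin n)) {r : ℕ} (hr : 1 ≤ r) (hrn : r ≤ n) :
    r ∈ cDesPerm π ↔ permVal π (rotval n 1 r) < permVal π r := by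
  rcases hrn.lt_or_eq with hrn | rfl
  · rw [rotval, Nat.add_sub_cancel, Nat.mod_eq_of_lt hrn, cDesPerm]
    have hDes : r ∈ DesPerm π ↔ permVal π (r + 1) < permVal π r := by
      simp only [DesPerm, Finset.mem_filter, Finset.mem_Icc]
      omega
    split_ifs <;> simp [hDes, hrn.ne]
  · have hnDes : r ∉ DesPerm π := fun h => by
      have := (Finset.mem_Icc.1 (Finset.mem_filter.1 h).1).2
      omega
    rw [rotval, Nat.add_sub_cancel, Nat.mod_self, cDesPerm]
    split_ifs with h <;> simp [h, hnDes]

def rotateDes (n k : ℕ) (C : Finset ℕ) : Finset ℕ :=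
  (Finset.Icc 1 (n - 1)).filter fun i => rotval n k i ∈ C

lemma DesPerm_mul_finRotate_pow (π : Equiv.Perm (Fin n)) (k : ℕ) :
    DesPerm (π * finRotate n ^ k) = rotateDes n k (cDesPerm π) := by
  ext i
  simp only [DesPerm, rotateDes, Finset.mem_filter]
  refine and_congr_right fun hi => ?_
  have hi := Finset.mem_Icc.1 hi
  rw [permVal_mul_finRotate_pow π k hi.1 (by omega), permVal_mul_finRotate_pow π k (by omega)
    (by omega), ← rotval_one_rotval k hi.1,
    mem_cDesPerm_iff π (one_le_rotval n k i) (rotval_le (by omega) k i)]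

lemma Qmult_ACmult (A : Multiset (Equiv.Perm (Fin n))) :
    Qmult n (ACmult A) = ((A.map cDesPerm).map fun C =>
      ((Multiset.range n).map fun k => Fqs n (rotateDes n k C)).sum).sum := by
  simp only [Qmult, ACmult, Multiset.map_bind, Multiset.sum_bind, Multiset.map_map,
    Function.comp_def, DesPerm_mul_finRotate_pow]

lemma map_DesPerm_eq_of_Qmult_eq {A A' : Multiset (Equiv.Perm (Fin n))}
    (hA : ∀ π ∈ A, FixesTop π) (hA' : ∀ π ∈ A', FixesTop π)
    (hQ : Qmult (n - 1) A = Qmult (n - 1) A') : A.map DesPerm = A'.map DesPerm := by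
  have hsub : ∀ B : Multiset (Equiv.Perm (Fin n)), (∀ π ∈ B, FixesTop π) →
      ∀ D ∈ B.map DesPerm, D ⊆ Finset.Icc 1 (n - 1 - 1) := by
    intro B hB D hD
    obtain ⟨π, hπ, rfl⟩ := Multiset.mem_map.1 hD
    exact DesPerm_subset_of_fixesTop (hB π hπ)
  refine multiset_eq_of_sum_map_Fqs_eq (hsub A hA) (hsub A' hA') ?_
  simpa only [Qmult, Multiset.map_map, Function.comp_def] using hQ

lemma map_cDesPerm_of_fixesTop (hn : 2 ≤ n) {B : Multiset (Equiv.Perm (Fin n))}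
    (hB : ∀ π ∈ B, FixesTop π) : B.map cDesPerm = (B.map DesPerm).map (insert n) := by
  rw [Multiset.map_map]
  exact Multiset.map_congr rfl fun π hπ => cDesPerm_of_fixesTop hn (hB π hπ)

end Permutations

/-- Lemma 4.1. If `A` and `A'` are multisets of permutations in
`S_{n-1}` (realized inside `S_n` as permutations fixing the letter `n`) with
`Q(A) = Q(A')`, then `Q(A C_n) = Q(A' C_n)`. -/
theorem Qmult_ACn_congr (n : ℕ) (hn : 2 ≤ n) (A A' : Multiset (Equiv.Perm (Fin n)))
    (hA : ∀ π ∈ A, FixesTop π) (hA' : ∀ π ∈ A', FixesTop π)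
    (hQ : Qmult (n - 1) A = Qmult (n - 1) A') :
    Qmult n (ACmult A) = Qmult n (ACmult A') := by
  rw [Qmult_ACmult, Qmult_ACmult, map_cDesPerm_of_fixesTop hn hA, map_cDesPerm_of_fixesTop hn hA',
    map_DesPerm_eq_of_Qmult_eq hA hA' hQ]

end SchurRot
end
end
end

section
/- Let n ≥ 2, let σ ∈ S_n satisfy σ(n) = n, and let 1 ≤ k ≤ n−1. Then Des(σ c^{−k}) = ({(d+k) mod n : d ∈ Des(σ)} ∩ [n−1]) ∪ {k}, where c is the n-cycle (1,2,…,n). -/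
open scoped Classical

noncomputable section

/-! In 0-indexed positions, `σ c^{-k}` carries at position `j` the value `σ (j - k)`, indices
taken mod `n`. So for `j ≠ k` the adjacent pair at `j - 1, j` is the pair of `σ` at
`j - k - 1, j - k`, a descent exactly when `j - k` is a descent of `σ`, i.e. when `j` is the
shift of a descent of `σ`. At `j = k` the pair is `σ (n - 1), σ 0`, which is always a descent
since `σ` fixes the largest letter `n - 1`. -/

namespace SchurRot

open Equiv Fin.NatCast

theorem DesPerm_subset_Icc {n : ℕ} (π : Perm (Fin n)) : DesPerm π ⊆ Finset.Icc 1 (n - 1) :=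
  Finset.filter_subset _ _

theorem mem_DesPerm_iff {m : ℕ} (π : Perm (Fin (m + 1))) {j : Fin (m + 1)} (hj : j ≠ 0) :
    (j : ℕ) ∈ DesPerm π ↔ π j < π (j - 1) := by
  have hj' : (j : ℕ) ≠ 0 := Fin.val_ne_iff.mpr hj
  have hprev : (⟨(j : ℕ) - 1, by omega⟩ : Fin (m + 1)) = j - 1 := by
    rw [Fin.ext_iff, Fin.coe_sub_one, if_neg hj]
  rw [DesPerm, Finset.mem_filter, Finset.mem_Icc, permVal, permVal, dif_pos (by omega),
    dif_pos (by omega)]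
  simp only [Nat.add_sub_cancel, Fin.eta, hprev, Nat.add_lt_add_iff_right, Fin.lt_def]
  omega

theorem finRotate_pow_apply (m k : ℕ) (j : Fin (m + 1)) :
    (finRotate (m + 1) ^ k) j = j + k := by
  induction k with
  | zero => simp
  | succ k ih =>
    rw [pow_succ', Perm.mul_apply, ih, finRotate_apply]
    push_cast
    abel

theorem mul_inv_finRotate_pow_apply (m k : ℕ) (σ : Perm (Fin (m + 1))) (j : Fin (m + 1)) :
    (σ * (finRotate (m + 1))⁻¹ ^ k) j = σ (j - k) := by
  rw [Perm.mul_apply, inv_pow, Perm.inv_def]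
  congr 1
  rw [Equiv.symm_apply_eq, finRotate_pow_apply, sub_add_cancel]

theorem FixesTop.apply_lt_last {m : ℕ} {σ : Perm (Fin (m + 1))} (hσ : FixesTop σ)
    {j : Fin (m + 1)} (hj : j ≠ Fin.last m) : σ j < Fin.last m := by
  rw [Fin.lt_last_iff_ne_last, ← hσ (Fin.last m) (by simp), Ne, σ.apply_eq_iff_eq]
  exact hj

theorem mem_image_add_mod_iff {n : ℕ} [NeZero n] {s : Finset ℕ} (hs : ∀ a ∈ s, a < n)
    (k : ℕ) (j : Fin n) :
    (j : ℕ) ∈ s.image (fun a => (a + k) % n) ↔ ((j - k : Fin n) : ℕ) ∈ s := by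
  have hval (a : Fin n) : ((a + k : Fin n) : ℕ) = (a + k) % n := by
    rw [Fin.val_add, Fin.val_natCast, Nat.add_mod_mod]
  constructor
  · rw [Finset.mem_image]
    rintro ⟨a, ha, hak⟩
    have : (⟨a, hs a ha⟩ : Fin n) = j - k := by
      rw [eq_sub_iff_add_eq, Fin.ext_iff, hval, hak]
    rwa [← this]
  · intro h
    refine Finset.mem_image.mpr ⟨_, h, ?_⟩
    rw [← hval, sub_add_cancel]

theorem Des_rotation_general (n : ℕ) (σ : Equiv.Perm (Fin n)) (hσ : FixesTop σ)
    (k : ℕ) (hk1 : 1 ≤ k) (hk2 : k ≤ n - 1) :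
    DesPerm (σ * ((finRotate n)⁻¹) ^ k) =
      ((DesPerm σ).image fun d => (d + k) % n) ∩ Finset.Icc 1 (n - 1) ∪ {k} := by
  obtain ⟨m, rfl⟩ : ∃ m, n = m + 1 := ⟨n - 1, by omega⟩
  have hDes (π : Perm (Fin (m + 1))) {a : ℕ} (ha : a ∈ DesPerm π) : 1 ≤ a ∧ a ≤ m :=
    Finset.mem_Icc.mp (DesPerm_subset_Icc π ha)
  ext i
  simp only [Finset.mem_union, Finset.mem_inter, Finset.mem_singleton, Finset.mem_Icc,
    Nat.add_sub_cancel]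
  by_cases hi : 1 ≤ i ∧ i ≤ m
  swap
  · exact iff_of_false (fun h => hi (hDes _ h)) (by omega)
  obtain ⟨j, rfl⟩ : ∃ j : Fin (m + 1), (j : ℕ) = i := ⟨⟨i, by omega⟩, rfl⟩
  have hj : j ≠ 0 := by rw [Ne, Fin.ext_iff, Fin.val_zero]; omega
  have hjk_iff : (j : ℕ) = k ↔ j = k := by rw [Fin.ext_iff, Fin.val_cast_of_lt (by omega)]
  rw [mem_DesPerm_iff _ hj, mul_inv_finRotate_pow_apply, mul_inv_finRotate_pow_apply,
    mem_image_add_mod_iff (fun a ha => by have := hDes σ ha; omega), hjk_iff]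
  by_cases hjk : j = k
  · refine iff_of_true ?_ (Or.inr hjk)
    have hlast : (-1 : Fin (m + 1)) = Fin.last m := Fin.ext Fin.coe_neg_one
    have hzero : (0 : Fin (m + 1)) ≠ Fin.last m := by
      rw [Ne, Fin.ext_iff, Fin.val_zero, Fin.val_last]; omega
    rw [hjk, sub_self, sub_sub_cancel_left, hlast, hσ (Fin.last m) (by simp)]
    exact hσ.apply_lt_last hzero
  · have hd : j - k ≠ 0 := sub_ne_zero.mpr hjk
    rw [sub_right_comm, ← mem_DesPerm_iff σ hd]
    simp [hi, hjk]

/-- Let `σ ∈ S_n` with `σ(n) = n` and `1 ≤ k ≤ n-1`. Then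
`Des(σ c^{-k}) = ({(d+k) mod n : d ∈ Des(σ)} ∩ [n-1]) ∪ {k}`. -/
theorem Des_rotation (n : ℕ) (hn : 2 ≤ n) (σ : Equiv.Perm (Fin n)) (hσ : FixesTop σ)
    (k : ℕ) (hk1 : 1 ≤ k) (hk2 : k ≤ n - 1) :
    DesPerm (σ * ((finRotate n)⁻¹) ^ k) =
      ((DesPerm σ).image fun d => (d + k) % n) ∩ Finset.Icc 1 (n - 1) ∪ {k} :=
  Des_rotation_general n σ hσ k hk1 hk2

end SchurRot
end
end

section
/- Let λ ⊢ n−1, let 1 ≤ k < n, and let T ∈ SYT(λ^□) with δ(T) = n; call the entries 1,2,…,k−1 moving and the entries k+1,…,n non-moving. Let Q be any tableau obtained at an intermediate step of the jdt straightening process applied to k+T. Then Q contains no two moving entries in which the smaller one lies weakly south and weakly east of the larger one (i.e. Q restricted to the moving entries is standard), and likewise for the non-moving entries; moreover, every elementary step performed by jdt in this process swaps one moving entry with one non-moving entry. -/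
open scoped Classical

noncomputable section

noncomputable section
namespace SchurRot

/-!
Write `M = {1,…,k-1}` (moving) and `N = {k+1,…,n}` (non-moving). In `k+T` the entry `k`
sits in the disconnected box, which is comparable with no other cell, so it never moves; and
`M`, `N` are each standard because adding `k` modulo `n` is increasing on their preimages.
The elementary step takes the minimal short entry `i`, in cell `c`, and swaps it with the
larger entry `j` immediately above or left of `c`, in cell `d`. As `d` lies north-west of
`c`, standardness of `M` and of `N` forces `i ∈ M` and `j ∈ N`. Both stay standard after
the swap: for `M` because no entry smaller than `i` is short, so that every cell weakly
north-west of such an entry carries a smaller one; for `N` because `j` dominates the upper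
and left neighbours of `c`, each of which lies in `N` or is smaller than `i`.
-/

section Straightening

variable {n : ℕ} {cells : Finset (ℕ × ℕ)} {f : ℕ × ℕ → ℕ}

lemma covBy_iff_eq_up_or_left {e c : ℕ × ℕ} :
    e ⋖ c ↔ (1 ≤ c.1 ∧ e = (c.1 - 1, c.2)) ∨ (1 ≤ c.2 ∧ e = (c.1, c.2 - 1)) := by
  obtain ⟨e₁, e₂⟩ := e
  obtain ⟨c₁, c₂⟩ := c
  simp only [Prod.mk_covBy_mk_iff, Nat.covBy_iff_add_one_eq, Prod.mk.injEq]
  omega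

lemma isShort_iff_exists_covBy {i : ℕ} :
    IsShort cells f i ↔ ∃ c ∈ cells, f c = i ∧ ∃ e ∈ cells, e ⋖ c ∧ i < f e := by
  simp only [IsShort, covBy_iff_eq_up_or_left]
  constructor
  · rintro ⟨c, hc, rfl, ⟨h, he, hlt⟩ | ⟨h, he, hlt⟩⟩
    · exact ⟨c, hc, rfl, _, he, Or.inl ⟨h, rfl⟩, hlt⟩
    · exact ⟨c, hc, rfl, _, he, Or.inr ⟨h, rfl⟩, hlt⟩
  · rintro ⟨c, hc, rfl, e, he, ⟨h, rfl⟩ | ⟨h, rfl⟩, hlt⟩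
    · exact ⟨c, hc, rfl, Or.inl ⟨h, he, hlt⟩⟩
    · exact ⟨c, hc, rfl, Or.inr ⟨h, he, hlt⟩⟩

lemma IsStandardF.not_isShort (hf : IsStandardF cells f) (i : ℕ) : ¬ IsShort cells f i := by
  rintro ⟨c, hc, rfl, ⟨h, he, hlt⟩ | ⟨h, he, hlt⟩⟩
  · exact (hf.2 _ he c hc rfl (by omega)).asymm hlt
  · exact (hf.1 _ he c hc rfl (by omega)).asymm hlt

/-- Walk from `b` to `a` through upper and left neighbours; each step decreases the entry,
since otherwise the entry left behind would be short. -/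
theorem apply_lt_apply_of_forall_not_isShort (hcells : (cells : Set (ℕ × ℕ)).OrdConnected)
    (hinj : Set.InjOn f cells) {a b : ℕ × ℕ} (ha : a ∈ cells) (hb : b ∈ cells) (hab : a < b)
    (hshort : ∀ e ≤ f b, ¬ IsShort cells f e) : f a < f b := by
  induction b using WellFoundedLT.induction with
  | _ b ih =>
  obtain ⟨x, hax, hxb⟩ := exists_le_covBy_of_lt hab
  have hx : x ∈ cells := hcells.out ha hb ⟨hax, hxb.le⟩
  have hxb_val : f x < f b := by
    refine lt_of_le_of_ne (not_lt.1 fun h => hshort _ le_rfl ?_)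
      fun h => hxb.ne (hinj hx hb h)
    exact isShort_iff_exists_covBy.2 ⟨b, hb, rfl, x, hx, hxb, h⟩
  rcases hax.eq_or_lt with rfl | hax
  · exact hxb_val
  · exact (ih x hxb.lt hx hax fun e he => hshort e (he.trans hxb_val.le)).trans hxb_val

theorem IsStandardF.apply_lt_apply (hf : IsStandardF cells f)
    (hcells : (cells : Set (ℕ × ℕ)).OrdConnected) (hinj : Set.InjOn f cells)
    {a b : ℕ × ℕ} (ha : a ∈ cells) (hb : b ∈ cells) (hab : a < b) : f a < f b :=
  apply_lt_apply_of_forall_not_isShort hcells hinj ha hb hab fun e _ => hf.not_isShort e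

theorem isStandardF_of_forall_not_isShort (hcells : (cells : Set (ℕ × ℕ)).OrdConnected)
    (hinj : Set.InjOn f cells) (h : ∀ i, ¬ IsShort cells f i) : IsStandardF cells f := by
  refine ⟨fun a ha b hb hrow hcol => ?_, fun a ha b hb hcol hrow => ?_⟩
  · exact apply_lt_apply_of_forall_not_isShort hcells hinj ha hb
      (Prod.lt_iff.2 (Or.inr ⟨hrow.le, hcol⟩)) fun e _ => h e
  · exact apply_lt_apply_of_forall_not_isShort hcells hinj ha hb
      (Prod.lt_iff.2 (Or.inl ⟨hrow, hcol.le⟩)) fun e _ => h e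

theorem shorts_nonempty_of_not_isStandardF (hcells : (cells : Set (ℕ × ℕ)).OrdConnected)
    (hinj : Set.InjOn f cells) (hmaps : Set.MapsTo f cells (Set.Icc 1 n))
    (h : ¬ IsStandardF cells f) : (shorts n cells f).Nonempty := by
  by_contra hemp
  refine h (isStandardF_of_forall_not_isShort hcells hinj fun i hi => hemp ⟨i, ?_⟩)
  obtain ⟨c, hc, hci, -⟩ := id hi
  exact Finset.mem_filter.2 ⟨Finset.mem_Icc.2 (hci ▸ hmaps hc), hi⟩

lemma cellOf_apply (hinj : Set.InjOn f cells) {c : ℕ × ℕ} (hc : c ∈ cells) :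
    cellOf cells f (f c) = c := by
  have hrow : {i | ∃ j, (i, j) ∈ cells ∧ f (i, j) = f c} = {c.1} := by
    ext i
    refine ⟨fun ⟨j, hm, he⟩ => congrArg Prod.fst (hinj hm hc he), ?_⟩
    rintro rfl
    exact ⟨c.2, hc, rfl⟩
  have hcol : {j | (c.1, j) ∈ cells ∧ f (c.1, j) = f c} = {c.2} := by
    ext j
    refine ⟨fun ⟨hm, he⟩ => congrArg Prod.snd (hinj hm hc he), ?_⟩
    rintro rfl
    exact ⟨hc, rfl⟩
  simp only [cellOf, rowOf, hrow, csInf_singleton, hcol]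

lemma mapEntries_apply_of_mem {φ : ℕ → ℕ} {c : ℕ × ℕ} (hc : c ∈ cells) :
    mapEntries cells φ f c = φ (f c) :=
  if_pos hc

theorem exists_stepFun_eq_swap (hinj : Set.InjOn f cells)
    (hmaps : Set.MapsTo f cells (Set.Icc 1 n)) (hne : (shorts n cells f).Nonempty) :
    ∃ c ∈ cells, ∃ d ∈ cells, d ⋖ c ∧ f c < f d ∧ (∀ e ∈ cells, e ⋖ c → f e ≤ f d) ∧
      (∀ e < f c, ¬ IsShort cells f e) ∧
      stepFun n cells f = mapEntries cells (Equiv.swap (f c) (f d)) f := by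
  obtain ⟨-, hshort⟩ := Finset.mem_filter.1 ((shorts n cells f).min'_mem hne)
  obtain ⟨c, hc, hci, e₀, he₀, he₀c, hlt⟩ := isShort_iff_exists_covBy.1 hshort
  set av := if 1 ≤ c.1 ∧ (c.1 - 1, c.2) ∈ cells then f (c.1 - 1, c.2) else 0
  set lv := if 1 ≤ c.2 ∧ (c.1, c.2 - 1) ∈ cells then f (c.1, c.2 - 1) else 0
  have hnbr : ∀ e ∈ cells, e ⋖ c → f e ≤ max av lv := by
    intro e he hec
    rcases covBy_iff_eq_up_or_left.1 hec with ⟨h, rfl⟩ | ⟨h, rfl⟩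
    · exact (if_pos ⟨h, he⟩ : av = _) ▸ le_max_left av lv
    · exact (if_pos ⟨h, he⟩ : lv = _) ▸ le_max_right av lv
  have hpos : 0 < max av lv := (Nat.zero_le _).trans_lt (hlt.trans_le (hnbr e₀ he₀ he₀c))
  obtain ⟨d, hd, hdc, hfd⟩ : ∃ d ∈ cells, d ⋖ c ∧ f d = max av lv := by
    rcases max_choice av lv with h | h <;> rw [h] at hpos ⊢
    · by_cases hup : 1 ≤ c.1 ∧ (c.1 - 1, c.2) ∈ cells
      · exact ⟨_, hup.2, covBy_iff_eq_up_or_left.2 (Or.inl ⟨hup.1, rfl⟩), (if_pos hup).symm⟩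
      · exact absurd (if_neg hup : av = 0) hpos.ne'
    · by_cases hleft : 1 ≤ c.2 ∧ (c.1, c.2 - 1) ∈ cells
      · exact ⟨_, hleft.2, covBy_iff_eq_up_or_left.2 (Or.inr ⟨hleft.1, rfl⟩),
          (if_pos hleft).symm⟩
      · exact absurd (if_neg hleft : lv = 0) hpos.ne'
  refine ⟨c, hc, d, hd, hdc, hfd ▸ hci ▸ hlt.trans_le (hnbr e₀ he₀ he₀c),
    fun e he hec => hfd ▸ hnbr e he hec, fun e he hsh => ?_, ?_⟩
  · obtain ⟨c', hc', hc'e, -⟩ := id hsh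
    have hmem : e ∈ shorts n cells f :=
      Finset.mem_filter.2 ⟨Finset.mem_Icc.2 (hc'e ▸ hmaps hc'), hsh⟩
    exact (hci ▸ he).not_ge ((shorts n cells f).min'_le e hmem)
  · rw [stepFun, dif_pos hne, hfd]
    simp only [← hci, cellOf_apply hinj hc]
    rfl

end Straightening

section SwapStep

variable {cells : Finset (ℕ × ℕ)} {f : ℕ × ℕ → ℕ} {c d : ℕ × ℕ}

lemma restrictedStd_iff {S : Finset ℕ} :
    RestrictedStd cells f S ↔
      ∀ a ∈ cells, ∀ b ∈ cells, f a ∈ S → f b ∈ S → a < b → f a < f b := by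
  simp only [RestrictedStd, lt_iff_le_and_ne, Prod.le_def, and_imp]

lemma mapEntries_swap_apply_left (hc : c ∈ cells) :
    mapEntries cells (Equiv.swap (f c) (f d)) f c = f d := by
  rw [mapEntries_apply_of_mem hc, Equiv.swap_apply_left]

lemma mapEntries_swap_apply_right (hd : d ∈ cells) :
    mapEntries cells (Equiv.swap (f c) (f d)) f d = f c := by
  rw [mapEntries_apply_of_mem hd, Equiv.swap_apply_right]

lemma mapEntries_swap_apply_of_ne (hinj : Set.InjOn f cells) (hc : c ∈ cells)
    (hd : d ∈ cells) {b : ℕ × ℕ} (hb : b ∈ cells) (hbc : b ≠ c) (hbd : b ≠ d) :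
    mapEntries cells (Equiv.swap (f c) (f d)) f b = f b := by
  rw [mapEntries_apply_of_mem hb,
    Equiv.swap_apply_of_ne_of_ne (hinj.ne hb hc hbc) (hinj.ne hb hd hbd)]

theorem RestrictedStd.mapEntries_swap_of_left_mem {S : Finset ℕ}
    (hS : RestrictedStd cells f S) (hcells : (cells : Set (ℕ × ℕ)).OrdConnected)
    (hinj : Set.InjOn f cells) (hc : c ∈ cells) (hd : d ∈ cells) (hdc : d < c)
    (hlt : f c < f d) (hcS : f c ∈ S) (hdS : f d ∉ S)
    (hmin : ∀ e < f c, ¬ IsShort cells f e) :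
    RestrictedStd cells (mapEntries cells (Equiv.swap (f c) (f d)) f) S := by
  rw [restrictedStd_iff] at hS ⊢
  intro a ha b hb haS hbS hab
  have hne_c : ∀ {x}, mapEntries cells (Equiv.swap (f c) (f d)) f x ∈ S → x ≠ c := by
    rintro x hx rfl
    exact hdS (by rwa [mapEntries_swap_apply_left hc] at hx)
  have hac := hne_c haS
  have hbc := hne_c hbS
  by_cases had : a = d
  · subst had
    rw [mapEntries_swap_apply_right ha, mapEntries_swap_apply_of_ne hinj hc ha hb hbc hab.ne']
    refine lt_of_le_of_ne (not_lt.1 fun hbi => ?_) fun h => hbc (hinj hb hc h.symm)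
    have := apply_lt_apply_of_forall_not_isShort hcells hinj ha hb hab
      fun e he => hmin e (he.trans_lt hbi)
    omega
  rw [mapEntries_swap_apply_of_ne hinj hc hd ha hac had] at haS ⊢
  by_cases hbd : b = d
  · subst hbd
    rw [mapEntries_swap_apply_right hb]
    exact hS a ha c hc haS hcS (hab.trans hdc)
  · rw [mapEntries_swap_apply_of_ne hinj hc hd hb hbc hbd] at hbS ⊢
    exact hS a ha b hb haS hbS hab

theorem RestrictedStd.mapEntries_swap_of_right_mem {S : Finset ℕ}
    (hS : RestrictedStd cells f S) (hcells : (cells : Set (ℕ × ℕ)).OrdConnected)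
    (hinj : Set.InjOn f cells) (hc : c ∈ cells) (hd : d ∈ cells) (hdc : d < c)
    (hlt : f c < f d) (hcS : f c ∉ S) (hdS : f d ∈ S)
    (hmin : ∀ e < f c, ¬ IsShort cells f e)
    (hnbr : ∀ e ∈ cells, e ⋖ c → f e ≤ f d ∧ (f e ∈ S ∨ f e < f c)) :
    RestrictedStd cells (mapEntries cells (Equiv.swap (f c) (f d)) f) S := by
  rw [restrictedStd_iff] at hS ⊢
  intro a ha b hb haS hbS hab
  have hne_d : ∀ {x}, mapEntries cells (Equiv.swap (f c) (f d)) f x ∈ S → x ≠ d := by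
    rintro x hx rfl
    exact hcS (by rwa [mapEntries_swap_apply_right hd] at hx)
  have had := hne_d haS
  have hbd := hne_d hbS
  by_cases hac : a = c
  · subst hac
    rw [mapEntries_swap_apply_of_ne hinj ha hd hb hab.ne' hbd] at hbS ⊢
    rw [mapEntries_swap_apply_left ha]
    exact hS d hd b hb hdS hbS (hdc.trans hab)
  rw [mapEntries_swap_apply_of_ne hinj hc hd ha hac had] at haS ⊢
  by_cases hbc : b = c
  · subst hbc
    rw [mapEntries_swap_apply_left hb]
    obtain ⟨e, hae, heb⟩ := exists_le_covBy_of_lt hab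
    have he : e ∈ cells := hcells.out ha hb ⟨hae, heb.le⟩
    obtain ⟨hed, heS | hei⟩ := hnbr e he heb
    · rcases hae.eq_or_lt with rfl | hae
      · exact lt_of_le_of_ne hed fun h => had (hinj ha hd h)
      · exact (hS a ha e he haS heS hae).trans_le hed
    · rcases hae.eq_or_lt with rfl | hae
      · exact hei.trans hlt
      · have := apply_lt_apply_of_forall_not_isShort hcells hinj ha he hae
          fun e' he' => hmin e' (he'.trans_lt hei)
        omega
  · rw [mapEntries_swap_apply_of_ne hinj hc hd hb hbc hbd] at hbS ⊢
    exact hS a ha b hb haS hbS hab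

end SwapStep

section Invariant

structure IsSplitStandard (n k : ℕ) (cells : Finset (ℕ × ℕ)) (z : ℕ × ℕ)
    (f : ℕ × ℕ → ℕ) : Prop where
  injOn : Set.InjOn f cells
  mapsTo : Set.MapsTo f cells (Set.Icc 1 n)
  apply_eq : f z = k
  moving : RestrictedStd cells f (Finset.Icc 1 (k - 1))
  nonMoving : RestrictedStd cells f (Finset.Icc (k + 1) n)

variable {n k : ℕ} {cells : Finset (ℕ × ℕ)} {z : ℕ × ℕ} {f : ℕ × ℕ → ℕ}

lemma IsSplitStandard.apply_ne_of_lt (hf : IsSplitStandard n k cells z f) (hz : z ∈ cells)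
    (hzc : ∀ c ∈ cells, ¬ c < z ∧ ¬ z < c) {a b : ℕ × ℕ} (ha : a ∈ cells) (hb : b ∈ cells)
    (hab : a < b) : f a ≠ k ∧ f b ≠ k := by
  rw [← hf.apply_eq]
  refine ⟨fun h => ?_, fun h => ?_⟩
  · exact (hzc b hb).2 (hf.injOn ha hz h ▸ hab)
  · exact (hzc a ha).1 (hf.injOn hb hz h ▸ hab)

theorem IsSplitStandard.mem_Icc_of_lt (hf : IsSplitStandard n k cells z f) (hz : z ∈ cells)
    (hzc : ∀ c ∈ cells, ¬ c < z ∧ ¬ z < c) {c d : ℕ × ℕ} (hc : c ∈ cells) (hd : d ∈ cells)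
    (hdc : d < c) (hlt : f c < f d) :
    f c ∈ Finset.Icc 1 (k - 1) ∧ f d ∈ Finset.Icc (k + 1) n := by
  obtain ⟨hdk, hck⟩ := hf.apply_ne_of_lt hz hzc hd hc hdc
  have hcr := hf.mapsTo hc
  have hdr := hf.mapsTo hd
  have hM := restrictedStd_iff.1 hf.moving
  have hN := restrictedStd_iff.1 hf.nonMoving
  simp only [Set.mem_Icc, Finset.mem_Icc] at hcr hdr hM hN ⊢
  have hdN : k + 1 ≤ f d := by
    by_contra h
    exact hlt.asymm (hM d hd c hc (by omega) (by omega) hdc)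
  have hcM : f c ≤ k - 1 := by
    by_contra h
    exact hlt.asymm (hN d hd c hc (by omega) (by omega) hdc)
  omega

lemma IsSplitStandard.mapEntries_swap (hf : IsSplitStandard n k cells z f) (hz : z ∈ cells)
    {c d : ℕ × ℕ} (hc : c ∈ cells) (hd : d ∈ cells) (hcz : f c ≠ k) (hdz : f d ≠ k)
    (hmoving : RestrictedStd cells (mapEntries cells (Equiv.swap (f c) (f d)) f)
      (Finset.Icc 1 (k - 1)))
    (hnonMoving : RestrictedStd cells (mapEntries cells (Equiv.swap (f c) (f d)) f)
      (Finset.Icc (k + 1) n)) :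
    IsSplitStandard n k cells z (mapEntries cells (Equiv.swap (f c) (f d)) f) where
  injOn := ((Equiv.injective _).comp_injOn hf.injOn).congr fun _ hb =>
    (mapEntries_apply_of_mem hb).symm
  mapsTo := by
    intro b hb
    rw [mapEntries_apply_of_mem hb, Equiv.swap_apply_def]
    split_ifs
    exacts [hf.mapsTo hd, hf.mapsTo hc, hf.mapsTo hb]
  apply_eq := by
    rw [mapEntries_swap_apply_of_ne hf.injOn hc hd hz (fun h => hcz (h ▸ hf.apply_eq))
      (fun h => hdz (h ▸ hf.apply_eq)), hf.apply_eq]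
  moving := hmoving
  nonMoving := hnonMoving

theorem IsSplitStandard.exists_swap_of_shorts_nonempty (hf : IsSplitStandard n k cells z f)
    (hcells : (cells : Set (ℕ × ℕ)).OrdConnected) (hz : z ∈ cells)
    (hzc : ∀ c ∈ cells, ¬ c < z ∧ ¬ z < c) (hne : (shorts n cells f).Nonempty) :
    ∃ i ∈ Finset.Icc 1 (k - 1), ∃ j ∈ Finset.Icc (k + 1) n,
      stepFun n cells f = mapEntries cells (Equiv.swap i j) f ∧ stepFun n cells f ≠ f ∧
      IsSplitStandard n k cells z (stepFun n cells f) := by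
  obtain ⟨c, hc, d, hd, hdc, hlt, hmax, hmin, hstep⟩ :=
    exists_stepFun_eq_swap hf.injOn hf.mapsTo hne
  obtain ⟨hcM, hdN⟩ := hf.mem_Icc_of_lt hz hzc hc hd hdc.lt hlt
  have hnotM : f d ∉ Finset.Icc 1 (k - 1) := by simp only [Finset.mem_Icc] at hdN ⊢; omega
  have hnotN : f c ∉ Finset.Icc (k + 1) n := by simp only [Finset.mem_Icc] at hcM ⊢; omega
  have hnbr : ∀ e ∈ cells, e ⋖ c → f e ≤ f d ∧ (f e ∈ Finset.Icc (k + 1) n ∨ f e < f c) := by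
    intro e he hec
    refine ⟨hmax e he hec, ?_⟩
    have hek := (hf.apply_ne_of_lt hz hzc he hc hec.lt).1
    have her := hf.mapsTo he
    by_cases heN : k + 1 ≤ f e
    · exact Or.inl (Finset.mem_Icc.2 ⟨heN, her.2⟩)
    · exact Or.inr (restrictedStd_iff.1 hf.moving e he c hc
        (Finset.mem_Icc.2 ⟨her.1, by omega⟩) hcM hec.lt)
  refine ⟨f c, hcM, f d, hdN, hstep, ?_, ?_⟩
  · rw [hstep]
    intro h
    exact hlt.ne' ((mapEntries_swap_apply_left hc).symm.trans (congrFun h c))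
  · obtain ⟨hdk, hck⟩ := hf.apply_ne_of_lt hz hzc hd hc hdc.lt
    rw [hstep]
    exact hf.mapEntries_swap hz hc hd hck hdk
      (hf.moving.mapEntries_swap_of_left_mem hcells hf.injOn hc hd hdc.lt hlt hcM hnotM hmin)
      (hf.nonMoving.mapEntries_swap_of_right_mem hcells hf.injOn hc hd hdc.lt hlt hnotN hdN
        hmin hnbr)

theorem IsSplitStandard.iterate_stepFun (hf : IsSplitStandard n k cells z f)
    (hcells : (cells : Set (ℕ × ℕ)).OrdConnected) (hz : z ∈ cells)
    (hzc : ∀ c ∈ cells, ¬ c < z ∧ ¬ z < c) (m : ℕ) :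
    IsSplitStandard n k cells z ((stepFun n cells)^[m] f) := by
  induction m with
  | zero => exact hf
  | succ m ih =>
    rw [Function.iterate_succ_apply']
    by_cases hne : (shorts n cells ((stepFun n cells)^[m] f)).Nonempty
    · obtain ⟨-, -, -, -, -, -, h⟩ := ih.exists_swap_of_shorts_nonempty hcells hz hzc hne
      exact h
    · rwa [stepFun, dif_neg hne]

lemma rotval_eq_ite {n k x : ℕ} (hx : 1 ≤ x) (hxn : x ≤ n) (hk : k ≤ n) :
    rotval n k x = if x + k ≤ n then x + k else x + k - n := by
  unfold rotval
  split_ifs with h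
  · rw [Nat.mod_eq_of_lt (by omega)]
    omega
  · rw [show x + k - 1 = x + k - 1 - n + n by omega, Nat.add_mod_right,
      Nat.mod_eq_of_lt (by omega)]
    omega

theorem IsStandardF.isSplitStandard_rotate {T : ℕ × ℕ → ℕ} (hstd : IsStandardF cells T)
    (hcells : (cells : Set (ℕ × ℕ)).OrdConnected) (hinj : Set.InjOn T cells)
    (hmaps : Set.MapsTo T cells (Set.Icc 1 n)) (hz : z ∈ cells) (hTz : T z = n)
    (hk1 : 1 ≤ k) (hk2 : k < n) :
    IsSplitStandard n k cells z (mapEntries cells (rotval n k) T) := by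
  have hval : ∀ a ∈ cells, 1 ≤ T a ∧ T a ≤ n ∧
      mapEntries cells (rotval n k) T a = if T a + k ≤ n then T a + k else T a + k - n :=
    fun a ha => ⟨(hmaps ha).1, (hmaps ha).2,
      (mapEntries_apply_of_mem ha).trans (rotval_eq_ite (hmaps ha).1 (hmaps ha).2 hk2.le)⟩
  refine ⟨fun a ha b hb h => hinj ha hb ?_, fun a ha => ?_, ?_, ?_, ?_⟩
  · obtain ⟨ha1, ha2, hfa⟩ := hval a ha
    obtain ⟨hb1, hb2, hfb⟩ := hval b hb
    rw [hfa, hfb] at h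
    split_ifs at h <;> omega
  · obtain ⟨ha1, ha2, hfa⟩ := hval a ha
    rw [hfa, Set.mem_Icc]
    split_ifs <;> omega
  · rw [(hval z hz).2.2, hTz]
    split_ifs <;> omega
  all_goals
    refine restrictedStd_iff.2 fun a ha b hb haS hbS hab => ?_
    have hTab := hstd.apply_lt_apply hcells hinj ha hb hab
    obtain ⟨ha1, ha2, hfa⟩ := hval a ha
    obtain ⟨hb1, hb2, hfb⟩ := hval b hb
    rw [Finset.mem_Icc, hfa] at haS
    rw [Finset.mem_Icc, hfb] at hbS
    rw [hfa, hfb]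
    split_ifs at haS hbS ⊢ <;> omega

end Invariant

section BoxShape

variable {lam : YoungDiagram} {c : ℕ × ℕ}

lemma mem_boxShape_iff :
    c ∈ boxShape lam ↔ c = boxCell lam ∨ 1 ≤ c.1 ∧ (c.1 - 1, c.2) ∈ lam := by
  obtain ⟨r, s⟩ := c
  simp only [boxShape, Finset.mem_insert, Finset.mem_image, YoungDiagram.mem_cells,
    Prod.exists, Prod.mk.injEq]
  refine or_congr_right ⟨?_, fun ⟨hr, h⟩ => ⟨r - 1, s, h, by omega, rfl⟩⟩
  rintro ⟨r', s', h, rfl, rfl⟩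
  exact ⟨by omega, h⟩

lemma boxCell_mem_boxShape : boxCell lam ∈ boxShape lam :=
  Finset.mem_insert_self _ _

lemma boxCell_incomparable (hc : c ∈ boxShape lam) : ¬ c < boxCell lam ∧ ¬ boxCell lam < c := by
  by_cases hne : c = boxCell lam
  · subst hne
    exact ⟨lt_irrefl _, lt_irrefl _⟩
  obtain ⟨h1, h⟩ := (mem_boxShape_iff.1 hc).resolve_left hne
  have h2 : c.2 < lam.rowLen 0 :=
    (YoungDiagram.mem_iff_lt_rowLen.1 h).trans_le (lam.rowLen_anti 0 _ (Nat.zero_le _))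
  refine ⟨fun h => ?_, fun h => ?_⟩
  · have : c.1 ≤ 0 := (Prod.le_def.1 h.le).1
    omega
  · have : lam.rowLen 0 ≤ c.2 := (Prod.le_def.1 h.le).2
    omega

lemma ordConnected_boxShape (lam : YoungDiagram) :
    (boxShape lam : Set (ℕ × ℕ)).OrdConnected := by
  refine ⟨fun a ha b hb x ⟨hax, hxb⟩ => ?_⟩
  have hab := hax.trans hxb
  by_cases hbz : b = boxCell lam
  · subst hbz
    rcases hab.eq_or_lt with rfl | hlt
    · exact le_antisymm hxb hax ▸ hb
    · exact absurd hlt (boxCell_incomparable ha).1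
  by_cases haz : a = boxCell lam
  · subst haz
    exact absurd (lt_of_le_of_ne hab (Ne.symm hbz)) (boxCell_incomparable hb).2
  obtain ⟨ha1, -⟩ := (mem_boxShape_iff.1 ha).resolve_left haz
  obtain ⟨-, hb2⟩ := (mem_boxShape_iff.1 hb).resolve_left hbz
  refine mem_boxShape_iff.2 (Or.inr ⟨ha1.trans hax.1, ?_⟩)
  exact lam.up_left_mem (Nat.sub_le_sub_right hxb.1 1) hxb.2 hb2

end BoxShape

theorem jdt_intermediate_standard_general (n : ℕ) (lam : YoungDiagram)
    (k : ℕ) (hk1 : 1 ≤ k) (hk2 : k < n)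
    (T : ℕ × ℕ → ℕ) (hT : IsFillingF n (boxShape lam) T)
    (hstd : IsStandardF (boxShape lam) T) (hdelta : deltaOf lam T = n)
    (m : ℕ) (Q : ℕ × ℕ → ℕ)
    (hQ : Q = (stepFun n (boxShape lam))^[m] (mapEntries (boxShape lam) (rotval n k) T)) :
    RestrictedStd (boxShape lam) Q (Finset.Icc 1 (k - 1)) ∧
    RestrictedStd (boxShape lam) Q (Finset.Icc (k + 1) n) ∧
    (¬ IsStandardF (boxShape lam) Q →
      ∃ i ∈ Finset.Icc 1 (k - 1), ∃ j ∈ Finset.Icc (k + 1) n,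
        stepFun n (boxShape lam) Q = mapEntries (boxShape lam) (⇑(Equiv.swap i j)) Q ∧
        stepFun n (boxShape lam) Q ≠ Q) := by
  have hcells := ordConnected_boxShape lam
  have hz := boxCell_mem_boxShape (lam := lam)
  have hzc : ∀ c ∈ boxShape lam, ¬ c < boxCell lam ∧ ¬ boxCell lam < c :=
    fun _ => boxCell_incomparable
  have hQ' : IsSplitStandard n k (boxShape lam) (boxCell lam) Q := hQ ▸
    (hstd.isSplitStandard_rotate hcells hT.1.injOn hT.1.mapsTo hz hdelta hk1 hk2).iterate_stepFun
      hcells hz hzc m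
  refine ⟨hQ'.moving, hQ'.nonMoving, fun hns => ?_⟩
  obtain ⟨i, hi, j, hj, hstep, hne, -⟩ := hQ'.exists_swap_of_shorts_nonempty hcells hz hzc
    (shorts_nonempty_of_not_isStandardF hcells hQ'.injOn hQ'.mapsTo hns)
  exact ⟨i, hi, j, hj, hstep, hne⟩

/-- Lemma 4.2. Let `λ ⊢ n-1`, `1 ≤ k < n`, and `T ∈ SYT(λ^□)` with
`δ(T) = n`. Let `Q` be any tableau obtained at an intermediate step of the `jdt`
straightening process applied to `k+T`. Then `Q` restricted to the moving entries
`1,…,k-1` is standard, `Q` restricted to the non-moving entries `k+1,…,n` is standard,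
and if `Q` is not yet standard then the elementary step applied to `Q` swaps one moving
entry with one non-moving entry. -/
theorem jdt_intermediate_standard (n : ℕ) (lam : YoungDiagram)
    (hlam : lam.cells.card = n - 1)
    (k : ℕ) (hk1 : 1 ≤ k) (hk2 : k < n)
    (T : ℕ × ℕ → ℕ) (hT : IsFillingF n (boxShape lam) T)
    (hstd : IsStandardF (boxShape lam) T) (hdelta : deltaOf lam T = n)
    (m : ℕ) (Q : ℕ × ℕ → ℕ)
    (hQ : Q = (stepFun n (boxShape lam))^[m] (mapEntries (boxShape lam) (rotval n k) T)) :
    RestrictedStd (boxShape lam) Q (Finset.Icc 1 (k - 1)) ∧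
    RestrictedStd (boxShape lam) Q (Finset.Icc (k + 1) n) ∧
    (¬ IsStandardF (boxShape lam) Q →
      ∃ i ∈ Finset.Icc 1 (k - 1), ∃ j ∈ Finset.Icc (k + 1) n,
        stepFun n (boxShape lam) Q = mapEntries (boxShape lam) (⇑(Equiv.swap i j)) Q ∧
        stepFun n (boxShape lam) Q ≠ Q) :=
  jdt_intermediate_standard_general n lam k hk1 hk2 T hT hstd hdelta m Q hQ

end SchurRot
end
end
end
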